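/- Let P be a normal logic program and 𝔄_P = (A_P, Att_P) its associated SETAF. Then a labelling L is a grounded labelling of 𝔄_P if and only if L2I_P(L) is a well-founded model of P. -/
import Mathlib


/-- A rule of a normal logic program:
`head ← bodyPos, not bodyNeg`. -/
structure Rule (α : Type) where
  head : α
  bodyPos : Finset α
  bodyNeg : Finset α
deriving DecidableEq

/-- A normal logic program (NLP): a finite set of rules. -/
abbrev NLP (α : Type) := Finset (Rule α)

variable {α : Type} [DecidableEq α]

/-- The atoms occurring in a rule. -/
def Rule.atoms (r : Rule α) : Finset α :=
  insert r.head (r.bodyPos ∪ r.bodyNeg)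

/-- The Herbrand base of a program: all atoms occurring in it. -/
def HB (P : NLP α) : Finset α := P.sup Rule.atoms

/-- A three-valued interpretation, given by its sets of true and false atoms. -/
structure Interp (α : Type) where
  T : Set α
  F : Set α

/-- `I` is a 3-valued interpretation over the Herbrand base `H`. -/
def IsInterp (H : Finset α) (I : Interp α) : Prop :=
  I.T ⊆ ↑H ∧ I.F ⊆ ↑H ∧ Disjoint I.T I.F

/-- A rule of a positive program obtained as a reduct; `hasU` records whether
the special atom `u` (undefined in every interpretation) occurs in its body. -/
structure PosRule (α : Type) where
  head : α
  bodyPos : Finset α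
  hasU : Prop

/-- The reduct `P/I`: delete every rule whose negative body meets `I.T`,
delete each `not b` with `b ∈ I.F`, and replace the remaining negative
literals by the special atom `u`. -/
def reduct (P : NLP α) (I : Interp α) : Set (PosRule α) :=
  { q | ∃ r ∈ P, (∀ b ∈ r.bodyNeg, b ∉ I.T) ∧
        q.head = r.head ∧ q.bodyPos = r.bodyPos ∧
        (q.hasU ↔ ∃ b ∈ r.bodyNeg, b ∉ I.F) }

/-- The `Ψ` operator of a positive program `Q` relative to the Herbrand base
`H`; the special atom `u` is neither true nor false in any interpretation. -/
def PsiOp (H : Finset α) (Q : Set (PosRule α)) (J : Interp α) : Interp α where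
  T := { c | c ∈ H ∧ ∃ q ∈ Q, q.head = c ∧ ¬ q.hasU ∧ ∀ a ∈ q.bodyPos, a ∈ J.T }
  F := { c | c ∈ H ∧ ∀ q ∈ Q, q.head = c → ∃ a ∈ q.bodyPos, a ∈ J.F }

/-- Iteration of `Ψ` starting from `⟨∅, H⟩`. -/
def PsiIter (H : Finset α) (Q : Set (PosRule α)) : ℕ → Interp α
  | 0 => ⟨∅, ↑H⟩
  | n + 1 => PsiOp H Q (PsiIter H Q n)

/-- `Ω_P(I)`: the least three-valued model of the reduct `P/I`,
obtained as the `ω`-iteration of `Ψ`. -/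
def OmegaOp (H : Finset α) (P : NLP α) (I : Interp α) : Interp α where
  T := ⋃ n, (PsiIter H (reduct P I) n).T
  F := ⋂ n, (PsiIter H (reduct P I) n).F

/-- `I` is a partial stable model of `P` (over Herbrand base `H`). -/
def IsPSModel (H : Finset α) (P : NLP α) (I : Interp α) : Prop :=
  IsInterp H I ∧ OmegaOp H P I = I

/-- Well-founded model: a partial stable model with `⊆`-minimal true part. -/
def IsWFModel (H : Finset α) (P : NLP α) (I : Interp α) : Prop :=
  IsPSModel H P I ∧ ∀ J, IsPSModel H P J → ¬ J.T ⊂ I.T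

/-- Regular model: a partial stable model with `⊆`-maximal true part. -/
def IsRegularModel (H : Finset α) (P : NLP α) (I : Interp α) : Prop :=
  IsPSModel H P I ∧ ∀ J, IsPSModel H P J → ¬ I.T ⊂ J.T

/-- Stable model: a partial stable model with `T ∪ F = H`. -/
def IsStableModel (H : Finset α) (P : NLP α) (I : Interp α) : Prop :=
  IsPSModel H P I ∧ I.T ∪ I.F = ↑H

/-- L-stable model: a partial stable model with `⊆`-maximal `T ∪ F`. -/
def IsLStableModel (H : Finset α) (P : NLP α) (I : Interp α) : Prop :=
  IsPSModel H P I ∧ ∀ J, IsPSModel H P J → ¬ (I.T ∪ I.F) ⊂ (J.T ∪ J.F)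

/-- `IsStatement P c V R`: there is a statement of `P` with conclusion `c`,
vulnerabilities `V` and rules `R`.  A statement is built from a rule
`r = c ← a₁,…,a_m, not b₁,…,not b_n ∈ P` together with statements `sᵢ` for the
positive body atoms `aᵢ` (with `r` not among their rules); its vulnerabilities
are `Vul(s₁) ∪ … ∪ Vul(s_m) ∪ {b₁,…,b_n}` and its rules are
`Rules(s₁) ∪ … ∪ Rules(s_m) ∪ {r}`. -/
inductive IsStatement (P : NLP α) : α → Finset α → Finset (Rule α) → Prop where
  | mk (r : Rule α) (hr : r ∈ P) (v : α → Finset α) (ρ : α → Finset (Rule α))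
      (hsub : ∀ a ∈ r.bodyPos, IsStatement P a (v a) (ρ a))
      (hnr : ∀ a ∈ r.bodyPos, r ∉ ρ a) :
      IsStatement P r.head (r.bodyPos.biUnion v ∪ r.bodyNeg)
        (insert r (r.bodyPos.biUnion ρ))

/-- `c` is an argument of `P`: it is the conclusion of some statement. -/
def IsArg (P : NLP α) (c : α) : Prop := ∃ V R, IsStatement P c V R

open Classical in
/-- The set `A_P` of arguments of `P`. -/
noncomputable def argsOf (P : NLP α) : Finset α := (HB P).filter (IsArg P)

/-- `B` meets every vulnerability set of `a` in `P`. -/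
def HitsVul (P : NLP α) (B : Finset α) (a : α) : Prop :=
  ∀ V R, IsStatement P a V R → ∃ b ∈ B, b ∈ V

/-- A SETAF: a finite set of arguments and an attack relation between
finite sets of arguments and arguments. -/
structure SETAF (α : Type) where
  args : Finset α
  att : Finset α → α → Prop

/-- Well-formedness of a SETAF: attackers are nonempty sets of arguments
attacking arguments, and attacking sets are `⊆`-minimal. -/
def SETAF.Wf (S : SETAF α) : Prop :=
  (∀ B a, S.att B a → B.Nonempty ∧ B ⊆ S.args ∧ a ∈ S.args) ∧
  (∀ B a, S.att B a → ∀ B', B' ⊂ B → ¬ S.att B' a)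

/-- The SETAF `𝔄_P` associated with an NLP `P`: its arguments are the
conclusions of the statements of `P`, and `B` attacks `a` iff `B` is a
`⊆`-minimal set of arguments meeting every vulnerability set of `a`. -/
noncomputable def setafOf (P : NLP α) : SETAF α where
  args := argsOf P
  att := fun B a =>
    B ⊆ argsOf P ∧ a ∈ argsOf P ∧ HitsVul P B a ∧ ∀ B', B' ⊂ B → ¬ HitsVul P B' a

/-- Labels for arguments. -/
inductive Lab : Type
  | inn | out | und
deriving DecidableEq

/-- `in(L)`. -/
def labIn (S : SETAF α) (L : α → Lab) : Set α := { a | a ∈ S.args ∧ L a = Lab.inn }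

/-- `out(L)`. -/
def labOut (S : SETAF α) (L : α → Lab) : Set α := { a | a ∈ S.args ∧ L a = Lab.out }

/-- `undec(L)`. -/
def labUnd (S : SETAF α) (L : α → Lab) : Set α := { a | a ∈ S.args ∧ L a = Lab.und }

/-- Admissible labelling. -/
def AdmissibleLab (S : SETAF α) (L : α → Lab) : Prop :=
  ∀ a ∈ S.args,
    (L a = Lab.inn → ∀ B, S.att B a → ∃ b ∈ B, L b = Lab.out) ∧
    (L a = Lab.out → ∃ B, S.att B a ∧ ∀ b ∈ B, L b = Lab.inn)

/-- Complete labelling. -/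
def CompleteLab (S : SETAF α) (L : α → Lab) : Prop :=
  AdmissibleLab S L ∧
  ∀ a ∈ S.args, L a = Lab.und →
    (∃ B, S.att B a ∧ ∀ b ∈ B, L b ≠ Lab.out) ∧
    (∀ B, S.att B a → ∃ b ∈ B, L b ≠ Lab.inn)

/-- Grounded labelling: complete with `⊆`-minimal `in(L)`. -/
def GroundedLab (S : SETAF α) (L : α → Lab) : Prop :=
  CompleteLab S L ∧ ∀ L', CompleteLab S L' → ¬ labIn S L' ⊂ labIn S L

/-- Preferred labelling: complete with `⊆`-maximal `in(L)`. -/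
def PreferredLab (S : SETAF α) (L : α → Lab) : Prop :=
  CompleteLab S L ∧ ∀ L', CompleteLab S L' → ¬ labIn S L ⊂ labIn S L'

/-- Stable labelling: complete with `undec(L) = ∅`. -/
def StableLab (S : SETAF α) (L : α → Lab) : Prop :=
  CompleteLab S L ∧ labUnd S L = ∅

/-- Semi-stable labelling: complete with `⊆`-minimal `undec(L)`. -/
def SemiStableLab (S : SETAF α) (L : α → Lab) : Prop :=
  CompleteLab S L ∧ ∀ L', CompleteLab S L' → ¬ labUnd S L' ⊂ labUnd S L

/-- `L2I_P`: the interpretation associated with a labelling of `𝔄_P`. -/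
def L2I (P : NLP α) (L : α → Lab) : Interp α where
  T := { c | c ∈ HB P ∧ c ∈ argsOf P ∧ L c = Lab.inn }
  F := { c | c ∈ HB P ∧ (c ∉ argsOf P ∨ (c ∈ argsOf P ∧ L c = Lab.out)) }

open Classical in
/-- `I2L`: the labelling associated with an interpretation (meaningful on
the arguments). -/
noncomputable def I2L (I : Interp α) : α → Lab := fun c =>
  if c ∈ I.T then Lab.inn else if c ∈ I.F then Lab.out else Lab.und

/-- `L2I_𝔄`: the interpretation `⟨in(L), out(L)⟩` associated with a labelling
of a SETAF `𝔄`. -/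
def L2Iset (S : SETAF α) (L : α → Lab) : Interp α := ⟨labIn S L, labOut S L⟩

/-- `V` meets every attacker of `a` in `S`. -/
def HitsAtt (S : SETAF α) (a : α) (V : Finset α) : Prop :=
  ∀ B, S.att B a → ∃ b ∈ B, b ∈ V

/-- `V ∈ V_a`: a `⊆`-minimal set of arguments meeting every attacker of `a`. -/
def MemVa (S : SETAF α) (a : α) (V : Finset α) : Prop :=
  V ⊆ S.args ∧ HitsAtt S a V ∧ ∀ V', V' ⊂ V → ¬ HitsAtt S a V'

open Classical in
/-- The NLP `P_𝔄` associated with a SETAF `𝔄`: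
`{ a ← not b₁,…,not b_n | a ∈ A, {b₁,…,b_n} ∈ V_a }`. -/
noncomputable def nlpOf (S : SETAF α) : NLP α :=
  ((S.args ×ˢ S.args.powerset).filter (fun p => MemVa S p.1 p.2)).image
    (fun p => { head := p.1, bodyPos := ∅, bodyNeg := p.2 })

/-- Redundancy-Free Atomic Logic Program: every rule is atomic (no positive
body), every atom is a head, and no rule's negative body strictly contains
that of another rule with the same head. -/
def IsRFALP (P : NLP α) : Prop :=
  (∀ r ∈ P, r.bodyPos = ∅) ∧
  HB P = P.image Rule.head ∧
  ∀ r ∈ P, ∀ r' ∈ P, r'.head = r.head → ¬ r'.bodyNeg ⊂ r.bodyNeg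

/-- Unfolding: replace a rule `c ← a, a₁,…,a_m, not b₁,…,not b_n` by all rules
obtained by resolving `a` against the rules of the program with head `a`. -/
def StepU (P₁ P₂ : NLP α) : Prop :=
  ∃ r ∈ P₁, ∃ a ∈ r.bodyPos,
    P₂ = P₁.erase r ∪
      (P₁.filter (fun r' => r'.head = a)).image
        (fun r' => { head := r.head,
                     bodyPos := r'.bodyPos ∪ r.bodyPos.erase a,
                     bodyNeg := r'.bodyNeg ∪ r.bodyNeg })

/-- Elimination of tautologies: delete a rule whose head occurs in its
positive body. -/
def StepT (P₁ P₂ : NLP α) : Prop :=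
  ∃ r ∈ P₁, r.head ∈ r.bodyPos ∧ P₂ = P₁.erase r

/-- Positive reduction: delete a literal `not b` from the body of a rule,
where `b` is not the head of any rule of the program. -/
def StepP (P₁ P₂ : NLP α) : Prop :=
  ∃ r ∈ P₁, ∃ b ∈ r.bodyNeg, (∀ r' ∈ P₁, r'.head ≠ b) ∧
    P₂ = insert { head := r.head, bodyPos := r.bodyPos,
                  bodyNeg := r.bodyNeg.erase b } (P₁.erase r)

/-- Elimination of non-minimal rules: delete a rule subsumed by a distinct
rule with the same head and smaller bodies. -/
def StepM (P₁ P₂ : NLP α) : Prop :=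
  ∃ r ∈ P₁, ∃ r' ∈ P₁, r ≠ r' ∧ r'.head = r.head ∧
    r'.bodyPos ⊆ r.bodyPos ∧ r'.bodyNeg ⊆ r.bodyNeg ∧ P₂ = P₁.erase r

/-- `↦_UTPM`: the union of the four transformations. -/
def StepUTPM (P₁ P₂ : NLP α) : Prop :=
  StepU P₁ P₂ ∨ StepT P₁ P₂ ∨ StepP P₁ P₂ ∨ StepM P₁ P₂

/-- `P` is irreducible w.r.t. `↦_UTPM`: there is no `P' ≠ P` with
`P ↦_UTPM P'`. -/
def UTPMIrreducible (P : NLP α) : Prop :=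
  ¬ ∃ P', StepUTPM P P' ∧ P' ≠ P

/-! ### Auxiliary development -/

section Aux

open Classical

lemma stmt_conc_mem {P : NLP α} {c : α} {V : Finset α} {R : Finset (Rule α)}
    (h : IsStatement P c V R) : c ∈ HB P := by
  induction h with
  | mk r hr v ρ hsub hnr ih =>
    exact Finset.mem_sup.2 ⟨r, hr, by simp [Rule.atoms]⟩

lemma stmt_vul_mem {P : NLP α} {c : α} {V : Finset α} {R : Finset (Rule α)}
    (h : IsStatement P c V R) : V ⊆ HB P := by
  induction h with
  | mk r hr v ρ hsub hnr ih =>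
    intro b hb
    rcases Finset.mem_union.1 hb with hb | hb
    · rcases Finset.mem_biUnion.1 hb with ⟨a, ha, hba⟩
      exact ih a ha hba
    · exact Finset.mem_sup.2 ⟨r, hr, by simp [Rule.atoms, hb]⟩

lemma mem_args_iff {P : NLP α} {c : α} :
    c ∈ argsOf P ↔ ∃ V R, IsStatement P c V R := by
  constructor
  · intro h
    exact (Finset.mem_filter.1 h).2
  · rintro ⟨V, R, h⟩
    exact Finset.mem_filter.2 ⟨stmt_conc_mem h, ⟨V, R, h⟩⟩

lemma args_subset_HB {P : NLP α} : argsOf P ⊆ HB P :=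
  Finset.filter_subset _ _

/-- Pruning: a statement containing a rule `r` contains a sub-statement with
conclusion `head r` and smaller vulnerabilities. -/
lemma stmt_prune {P : NLP α} {c : α} {V : Finset α} {R : Finset (Rule α)}
    (h : IsStatement P c V R) :
    ∀ r ∈ R, ∃ V' R', IsStatement P r.head V' R' ∧ V' ⊆ V := by
  induction h with
  | mk r hr v ρ hsub hnr ih =>
    intro r' hr'
    rcases Finset.mem_insert.1 hr' with h1 | h2
    · refine ⟨r.bodyPos.biUnion v ∪ r.bodyNeg, insert r (r.bodyPos.biUnion ρ), ?_,
        Finset.Subset.refl _⟩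
      rw [h1]
      exact IsStatement.mk r hr v ρ hsub hnr
    · rcases Finset.mem_biUnion.1 h2 with ⟨a, ha, hra⟩
      rcases ih a ha r' hra with ⟨V', R', hst, hsub'⟩
      refine ⟨V', R', hst, hsub'.trans ?_⟩
      exact (Finset.subset_biUnion_of_mem v ha).trans Finset.subset_union_left

lemma psiIter_step (H : Finset α) (Q : Set (PosRule α)) (n : ℕ) :
    (PsiIter H Q n).T ⊆ (PsiIter H Q (n + 1)).T ∧
      (PsiIter H Q (n + 1)).F ⊆ (PsiIter H Q n).F := by
  induction n with
  | zero =>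
    constructor
    · intro c hc; exact absurd hc (by simp [PsiIter])
    · intro c hc; exact hc.1
  | succ n ih =>
    constructor
    · rintro c ⟨hcH, q, hq, hh, hu, hb⟩
      exact ⟨hcH, q, hq, hh, hu, fun a ha => ih.1 (hb a ha)⟩
    · rintro c ⟨hcH, hall⟩
      refine ⟨hcH, fun q hq hh => ?_⟩
      obtain ⟨a, ha, haF⟩ := hall q hq hh
      exact ⟨a, ha, ih.2 haF⟩

lemma psiIter_T_mono (H : Finset α) (Q : Set (PosRule α)) {n m : ℕ} (h : n ≤ m) :
    (PsiIter H Q n).T ⊆ (PsiIter H Q m).T := by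
  induction m, h using Nat.le_induction with
  | base => exact fun x hx => hx
  | succ m hm ih => exact ih.trans (psiIter_step H Q m).1

lemma psiIter_F_anti (H : Finset α) (Q : Set (PosRule α)) {n m : ℕ} (h : n ≤ m) :
    (PsiIter H Q m).F ⊆ (PsiIter H Q n).F := by
  induction m, h using Nat.le_induction with
  | base => exact fun x hx => hx
  | succ m hm ih => exact (psiIter_step H Q m).2.trans ih

/-- From a statement with all vulnerabilities false, truth in the fixpoint. -/
lemma stmt_T {P : NLP α} {I : Interp α} (hdis : Disjoint I.T I.F) :
    ∀ {c : α} {V : Finset α} {R : Finset (Rule α)}, IsStatement P c V R →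
      (∀ b ∈ V, b ∈ I.F) → ∃ n, c ∈ (PsiIter (HB P) (reduct P I) n).T := by
  intro c V R h
  induction h with
  | mk r hr v ρ hsub hnr ih =>
    intro hF
    have hvF : ∀ a ∈ r.bodyPos, ∀ b ∈ v a, b ∈ I.F := by
      intro a ha b hb
      exact hF b (Finset.mem_union_left _ (Finset.mem_biUnion.2 ⟨a, ha, hb⟩))
    have hnegF : ∀ b ∈ r.bodyNeg, b ∈ I.F := fun b hb =>
      hF b (Finset.mem_union_right _ hb)
    -- choose levels for body atoms
    have key : ∀ a : α, ∃ n, a ∈ r.bodyPos → a ∈ (PsiIter (HB P) (reduct P I) n).T := by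
      intro a
      by_cases ha : a ∈ r.bodyPos
      · obtain ⟨n, hn⟩ := ih a ha (hvF a ha)
        exact ⟨n, fun _ => hn⟩
      · exact ⟨0, fun h => absurd h ha⟩
    choose lev hlev using key
    set N := r.bodyPos.sup lev with hN
    refine ⟨N + 1, ?_⟩
    have hcH : r.head ∈ HB P := Finset.mem_sup.2 ⟨r, hr, by simp [Rule.atoms]⟩
    refine ⟨hcH, ⟨r.head, r.bodyPos, ∃ b ∈ r.bodyNeg, b ∉ I.F⟩, ?_, rfl, ?_, ?_⟩
    · exact ⟨r, hr, fun b hb hbT => (Set.disjoint_left.1 hdis hbT) (hnegF b hb), rfl, rfl, Iff.rfl⟩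
    · rintro ⟨b, hb, hbF⟩
      exact hbF (hnegF b hb)
    · intro a ha
      exact psiIter_T_mono _ _ (Finset.le_sup ha) (hlev a ha)

/-- Truth at some iteration yields a statement with all vulnerabilities false. -/
lemma T_to_stmt {P : NLP α} {I : Interp α} :
    ∀ (n : ℕ) (c : α), c ∈ (PsiIter (HB P) (reduct P I) n).T →
      ∃ V R, IsStatement P c V R ∧ ∀ b ∈ V, b ∈ I.F := by
  intro n
  induction n with
  | zero => intro c hc; exact absurd hc (by simp [PsiIter])
  | succ n ih =>
    rintro c ⟨hcH, q, hq, hh, hu, hb⟩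
    obtain ⟨r, hr, hneg, hqh, hqb, hqu⟩ := hq
    have hnegF : ∀ b ∈ r.bodyNeg, b ∈ I.F := by
      intro b hbneg
      by_contra hbF
      exact hu (hqu.2 ⟨b, hbneg, hbF⟩)
    have key : ∀ a : α, ∃ V R, a ∈ r.bodyPos →
        (IsStatement P a V R ∧ ∀ b ∈ V, b ∈ I.F) := by
      intro a
      by_cases ha : a ∈ r.bodyPos
      · obtain ⟨V, R, h1, h2⟩ := ih a (hb a (hqb ▸ ha))
        exact ⟨V, R, fun _ => ⟨h1, h2⟩⟩
      · exact ⟨∅, ∅, fun h => absurd h ha⟩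
    choose v ρ hvρ using key
    have hc_eq : r.head = c := by rw [← hqh, hh]
    by_cases hrin : ∃ a ∈ r.bodyPos, r ∈ ρ a
    · obtain ⟨a, ha, hra⟩ := hrin
      obtain ⟨V', R', hst, hsub'⟩ := stmt_prune (hvρ a ha).1 r hra
      refine ⟨V', R', ?_, fun b hbV => (hvρ a ha).2 b (hsub' hbV)⟩
      exact hc_eq ▸ hst
    · push_neg at hrin
      refine ⟨r.bodyPos.biUnion v ∪ r.bodyNeg, insert r (r.bodyPos.biUnion ρ), ?_, ?_⟩
      · exact hc_eq ▸ IsStatement.mk r hr v ρ (fun a ha => (hvρ a ha).1) hrin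
      · intro b hbV
        rcases Finset.mem_union.1 hbV with hb1 | hb2
        · rcases Finset.mem_biUnion.1 hb1 with ⟨a, ha, hba⟩
          exact (hvρ a ha).2 b hba
        · exact hnegF b hb2

/-- A statement all of whose vulnerabilities avoid `I.T` shows the conclusion
escapes falsity at some iteration. -/
lemma stmt_notF {P : NLP α} {I : Interp α} :
    ∀ {c : α} {V : Finset α} {R : Finset (Rule α)}, IsStatement P c V R →
      (∀ b ∈ V, b ∉ I.T) → ∃ n, c ∉ (PsiIter (HB P) (reduct P I) n).F := by
  intro c V R h
  induction h with
  | mk r hr v ρ hsub hnr ih =>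
    intro hT
    have hvT : ∀ a ∈ r.bodyPos, ∀ b ∈ v a, b ∉ I.T := by
      intro a ha b hb
      exact hT b (Finset.mem_union_left _ (Finset.mem_biUnion.2 ⟨a, ha, hb⟩))
    have hnegT : ∀ b ∈ r.bodyNeg, b ∉ I.T := fun b hb =>
      hT b (Finset.mem_union_right _ hb)
    have key : ∀ a : α, ∃ n, a ∈ r.bodyPos → a ∉ (PsiIter (HB P) (reduct P I) n).F := by
      intro a
      by_cases ha : a ∈ r.bodyPos
      · obtain ⟨n, hn⟩ := ih a ha (hvT a ha)
        exact ⟨n, fun _ => hn⟩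
      · exact ⟨0, fun h => absurd h ha⟩
    choose lev hlev using key
    set N := r.bodyPos.sup lev with hN
    refine ⟨N + 1, ?_⟩
    rintro ⟨hcH, hall⟩
    have hq : (⟨r.head, r.bodyPos, ∃ b ∈ r.bodyNeg, b ∉ I.F⟩ : PosRule α) ∈ reduct P I :=
      ⟨r, hr, hnegT, rfl, rfl, Iff.rfl⟩
    obtain ⟨a, ha, haF⟩ := hall _ hq rfl
    exact (hlev a ha) (psiIter_F_anti _ _ (Finset.le_sup ha) haF)

/-- If every statement for `c` has a true vulnerability, `c` is false at every
iteration. -/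
lemma F_of_all_stmt {P : NLP α} {I : Interp α} :
    ∀ (n : ℕ) (c : α), c ∈ HB P →
      (∀ V R, IsStatement P c V R → ∃ b ∈ V, b ∈ I.T) →
      c ∈ (PsiIter (HB P) (reduct P I) n).F := by
  intro n
  induction n with
  | zero => intro c hc _; exact hc
  | succ n ih =>
    intro c hcH hstmt
    refine ⟨hcH, ?_⟩
    intro q hq hh
    obtain ⟨r, hr, hneg, hqh, hqb, hqu⟩ := hq
    by_contra hnone
    push_neg at hnone
    rw [hqb] at hnone
    have key : ∀ a : α, ∃ V R, a ∈ r.bodyPos →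
        (IsStatement P a V R ∧ ∀ b ∈ V, b ∉ I.T) := by
      intro a
      by_cases ha : a ∈ r.bodyPos
      · have haH : a ∈ HB P := Finset.mem_sup.2 ⟨r, hr, by simp [Rule.atoms, ha]⟩
        have : ¬ (∀ V R, IsStatement P a V R → ∃ b ∈ V, b ∈ I.T) := by
          intro hcon
          exact (hnone a ha) (ih a haH hcon)
        push_neg at this
        obtain ⟨V, R, h1, h2⟩ := this
        exact ⟨V, R, fun _ => ⟨h1, h2⟩⟩
      · exact ⟨∅, ∅, fun h => absurd h ha⟩
    choose v ρ hvρ using key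
    have hc_eq : r.head = c := by rw [← hqh, hh]
    by_cases hrin : ∃ a ∈ r.bodyPos, r ∈ ρ a
    · obtain ⟨a, ha, hra⟩ := hrin
      obtain ⟨V', R', hst, hsub'⟩ := stmt_prune (hvρ a ha).1 r hra
      rw [hc_eq] at hst
      obtain ⟨b, hbV, hbT⟩ := hstmt V' R' hst
      exact (hvρ a ha).2 b (hsub' hbV) hbT
    · push_neg at hrin
      have hst := IsStatement.mk r hr v ρ (fun a ha => (hvρ a ha).1) hrin
      rw [hc_eq] at hst
      obtain ⟨b, hbV, hbT⟩ := hstmt _ _ hst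
      rcases Finset.mem_union.1 hbV with hb1 | hb2
      · rcases Finset.mem_biUnion.1 hb1 with ⟨a, ha, hba⟩
        exact (hvρ a ha).2 b hba hbT
      · exact hneg b hb2 hbT

/-- Characterization of the true part of `Ω_P(I)`. -/
lemma omega_T_spec {P : NLP α} {I : Interp α} (hdis : Disjoint I.T I.F) :
    (OmegaOp (HB P) P I).T = {c | ∃ V R, IsStatement P c V R ∧ ∀ b ∈ V, b ∈ I.F} := by
  ext c
  constructor
  · intro hc
    obtain ⟨s, ⟨n, rfl⟩, hcs⟩ := hc
    exact T_to_stmt n c hcs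
  · rintro ⟨V, R, hst, hF⟩
    obtain ⟨n, hn⟩ := stmt_T hdis hst hF
    exact Set.mem_iUnion.2 ⟨n, hn⟩

/-- Characterization of the false part of `Ω_P(I)`. -/
lemma omega_F_spec {P : NLP α} {I : Interp α} :
    (OmegaOp (HB P) P I).F =
      {c | c ∈ HB P ∧ ∀ V R, IsStatement P c V R → ∃ b ∈ V, b ∈ I.T} := by
  ext c
  constructor
  · intro hc
    have hc' : ∀ n, c ∈ (PsiIter (HB P) (reduct P I) n).F := by
      intro n; exact Set.mem_iInter.1 hc n
    have hcH : c ∈ HB P := hc' 0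
    refine ⟨hcH, fun V R hst => ?_⟩
    by_contra hno
    push_neg at hno
    obtain ⟨n, hn⟩ := stmt_notF hst hno
    exact hn (hc' n)
  · rintro ⟨hcH, hstmt⟩
    exact Set.mem_iInter.2 fun n => F_of_all_stmt n c hcH hstmt

lemma exists_min_hits {P : NLP α} {a : α} :
    ∀ C : Finset α, HitsVul P C a →
      ∃ B, B ⊆ C ∧ HitsVul P B a ∧ ∀ B', B' ⊂ B → ¬ HitsVul P B' a := by
  intro C
  induction C using Finset.strongInduction with
  | _ C ih =>
    intro hC
    by_cases h : ∃ B', B' ⊂ C ∧ HitsVul P B' a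
    · obtain ⟨B', hB', hH⟩ := h
      obtain ⟨B, h1, h2, h3⟩ := ih B' hB' hH
      exact ⟨B, h1.trans hB'.subset, h2, h3⟩
    · exact ⟨C, Finset.Subset.refl _, hC, fun B' hB' hH => h ⟨B', hB', hH⟩⟩

lemma hits_iff_att {P : NLP α} {a : α} (ha : a ∈ argsOf P) {C : Finset α}
    (hCa : C ⊆ argsOf P) :
    HitsVul P C a ↔ ∃ B, (setafOf P).att B a ∧ B ⊆ C := by
  constructor
  · intro h
    obtain ⟨B, hBC, hH, hmin⟩ := exists_min_hits C h
    exact ⟨B, ⟨hBC.trans hCa, ha, hH, fun B' hs => hmin B' hs⟩, hBC⟩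
  · rintro ⟨B, ⟨_, _, hH, _⟩, hBC⟩
    intro V R hst
    obtain ⟨b, hb, hbV⟩ := hH V R hst
    exact ⟨b, hBC hb, hbV⟩

/-- `legitIn`: there is a statement all of whose vulnerabilities are false. -/
def legitIn (P : NLP α) (I : Interp α) (c : α) : Prop :=
  ∃ V R, IsStatement P c V R ∧ ∀ b ∈ V, b ∈ I.F

/-- `legitOut`: every statement has a true vulnerability. -/
def legitOut (P : NLP α) (I : Interp α) (c : α) : Prop :=
  ∀ V R, IsStatement P c V R → ∃ b ∈ V, b ∈ I.T

lemma L2I_isInterp (P : NLP α) (L : α → Lab) : IsInterp (HB P) (L2I P L) := by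
  refine ⟨fun c hc => hc.1, fun c hc => hc.1, Set.disjoint_left.2 ?_⟩
  rintro c ⟨hcH, hcA, hcI⟩ ⟨_, h⟩
  rcases h with h | ⟨_, h⟩
  · exact h hcA
  · rw [hcI] at h; exact Lab.noConfusion h

lemma setafOf_args (P : NLP α) : (setafOf P).args = argsOf P := rfl

lemma labIn_eq (P : NLP α) (L : α → Lab) :
    labIn (setafOf P) L = (L2I P L).T := by
  ext c
  constructor
  · rintro ⟨h1, h2⟩
    exact ⟨args_subset_HB h1, h1, h2⟩
  · rintro ⟨_, h1, h2⟩
    exact ⟨h1, h2⟩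

lemma mem_L2I_T {P : NLP α} {L : α → Lab} {b : α} :
    b ∈ (L2I P L).T ↔ b ∈ argsOf P ∧ L b = Lab.inn := by
  constructor
  · rintro ⟨_, h1, h2⟩; exact ⟨h1, h2⟩
  · rintro ⟨h1, h2⟩; exact ⟨args_subset_HB h1, h1, h2⟩

lemma mem_L2I_F {P : NLP α} {L : α → Lab} {b : α} (hb : b ∈ HB P) :
    b ∈ (L2I P L).F ↔ (b ∉ argsOf P ∨ L b = Lab.out) := by
  constructor
  · rintro ⟨_, h⟩
    rcases h with h | ⟨_, h⟩
    · exact Or.inl h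
    · exact Or.inr h
  · rintro (h | h)
    · exact ⟨hb, Or.inl h⟩
    · by_cases hA : b ∈ argsOf P
      · exact ⟨hb, Or.inr ⟨hA, h⟩⟩
      · exact ⟨hb, Or.inl hA⟩

/-- Bridge: `legitOut` corresponds to having an attacker labelled all-in. -/
lemma bridge_out {P : NLP α} {L : α → Lab} {a : α} (ha : a ∈ argsOf P) :
    legitOut P (L2I P L) a ↔
      ∃ B, (setafOf P).att B a ∧ ∀ b ∈ B, L b = Lab.inn := by
  classical
  set Cin : Finset α := (argsOf P).filter (fun b => L b = Lab.inn) with hCin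
  have hCa : Cin ⊆ argsOf P := Finset.filter_subset _ _
  have h1 : legitOut P (L2I P L) a ↔ HitsVul P Cin a := by
    constructor
    · intro h V R hst
      obtain ⟨b, hbV, hbT⟩ := h V R hst
      exact ⟨b, Finset.mem_filter.2 ⟨(mem_L2I_T.1 hbT).1, (mem_L2I_T.1 hbT).2⟩, hbV⟩
    · intro h V R hst
      obtain ⟨b, hbC, hbV⟩ := h V R hst
      have := Finset.mem_filter.1 hbC
      exact ⟨b, hbV, mem_L2I_T.2 ⟨this.1, this.2⟩⟩
  rw [h1, hits_iff_att ha hCa]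
  constructor
  · rintro ⟨B, hatt, hBC⟩
    exact ⟨B, hatt, fun b hb => (Finset.mem_filter.1 (hBC hb)).2⟩
  · rintro ⟨B, hatt, hBin⟩
    refine ⟨B, hatt, fun b hb => Finset.mem_filter.2 ⟨hatt.1 hb, hBin b hb⟩⟩

/-- Bridge: `legitIn` corresponds to every attacker containing an out-labelled
argument; formulated via the complement. -/
lemma bridge_in {P : NLP α} {L : α → Lab} {a : α} (ha : a ∈ argsOf P) :
    legitIn P (L2I P L) a ↔
      ¬ ∃ B, (setafOf P).att B a ∧ ∀ b ∈ B, L b ≠ Lab.out := by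
  classical
  set Cno : Finset α := (argsOf P).filter (fun b => L b ≠ Lab.out) with hCno
  have hCa : Cno ⊆ argsOf P := Finset.filter_subset _ _
  have h1 : legitIn P (L2I P L) a ↔ ¬ HitsVul P Cno a := by
    constructor
    · rintro ⟨V, R, hst, hF⟩ hH
      obtain ⟨b, hbC, hbV⟩ := hH V R hst
      have hb' := Finset.mem_filter.1 hbC
      rcases (mem_L2I_F (stmt_vul_mem hst hbV)).1 (hF b hbV) with h | h
      · exact h hb'.1
      · exact hb'.2 h
    · intro h
      unfold HitsVul at h
      push_neg at h
      obtain ⟨V, R, hst, hno⟩ := h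
      refine ⟨V, R, hst, fun b hbV => ?_⟩
      rw [mem_L2I_F (stmt_vul_mem hst hbV)]
      by_cases hA : b ∈ argsOf P
      · right
        by_contra hout
        exact hno b (Finset.mem_filter.2 ⟨hA, hout⟩) hbV
      · exact Or.inl hA
  rw [h1, hits_iff_att ha hCa]
  constructor
  · intro h
    rintro ⟨B, hatt, hBno⟩
    exact h ⟨B, hatt, fun b hb => Finset.mem_filter.2 ⟨hatt.1 hb, hBno b hb⟩⟩
  · intro h
    rintro ⟨B, hatt, hBC⟩
    exact h ⟨B, hatt, fun b hb => (Finset.mem_filter.1 (hBC hb)).2⟩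

lemma not_legit_both {P : NLP α} {I : Interp α} (hdis : Disjoint I.T I.F) {a : α}
    (ha : a ∈ argsOf P) : ¬ (legitIn P I a ∧ legitOut P I a) := by
  rintro ⟨⟨V, R, hst, hF⟩, hout⟩
  obtain ⟨b, hbV, hbT⟩ := hout V R hst
  exact Set.disjoint_left.1 hdis hbT (hF b hbV)

lemma interp_ext {J K : Interp α} (hT : J.T = K.T) (hF : J.F = K.F) : J = K := by
  cases J; cases K; simp_all

/-- The key lemma: complete labellings correspond to partial stable models. -/
lemma lemmaA (P : NLP α) (L : α → Lab) :
    CompleteLab (setafOf P) L ↔ IsPSModel (HB P) P (L2I P L) := by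
  classical
  set I := L2I P L with hI
  have hint : IsInterp (HB P) I := L2I_isInterp P L
  have hdis : Disjoint I.T I.F := hint.2.2
  -- Ω(I) = I ↔ pointwise conditions on arguments
  have homega : OmegaOp (HB P) P I = I ↔
      ∀ a ∈ argsOf P, (L a = Lab.inn ↔ legitIn P I a) ∧
        (L a = Lab.out ↔ legitOut P I a) := by
    constructor
    · intro h a haA
      constructor
      · constructor
        · intro hin
          have : a ∈ I.T := mem_L2I_T.2 ⟨haA, hin⟩
          rw [← h] at this
          rw [omega_T_spec hdis] at this
          exact this
        · intro hleg
          have : a ∈ (OmegaOp (HB P) P I).T := by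
            rw [omega_T_spec hdis]; exact hleg
          rw [h] at this
          exact (mem_L2I_T.1 this).2
      · constructor
        · intro hout
          have : a ∈ I.F := (mem_L2I_F (args_subset_HB haA)).2 (Or.inr hout)
          rw [← h] at this
          rw [omega_F_spec] at this
          exact this.2
        · intro hleg
          have : a ∈ (OmegaOp (HB P) P I).F := by
            rw [omega_F_spec]; exact ⟨args_subset_HB haA, hleg⟩
          rw [h] at this
          rcases (mem_L2I_F (args_subset_HB haA)).1 this with h' | h'
          · exact absurd haA h'
          · exact h'
    · intro h
      refine interp_ext ?_ ?_
      · rw [omega_T_spec hdis]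
        ext c
        constructor
        · intro hc
          have hcA : c ∈ argsOf P := mem_args_iff.2 ⟨hc.choose, hc.choose_spec.choose,
            hc.choose_spec.choose_spec.1⟩
          exact mem_L2I_T.2 ⟨hcA, ((h c hcA).1).2 hc⟩
        · intro hc
          obtain ⟨hcA, hcin⟩ := mem_L2I_T.1 hc
          exact ((h c hcA).1).1 hcin
      · rw [omega_F_spec]
        ext c
        constructor
        · rintro ⟨hcH, hleg⟩
          rw [mem_L2I_F hcH]
          by_cases hcA : c ∈ argsOf P
          · exact Or.inr (((h c hcA).2).2 hleg)
          · exact Or.inl hcA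
        · intro hc
          have hcH : c ∈ HB P := hc.1
          refine ⟨hcH, ?_⟩
          rcases (mem_L2I_F hcH).1 hc with hcA | hcout
          · intro V R hst
            exact absurd (mem_args_iff.2 ⟨V, R, hst⟩) hcA
          · by_cases hcA : c ∈ argsOf P
            · exact ((h c hcA).2).1 hcout
            · intro V R hst
              exact absurd (mem_args_iff.2 ⟨V, R, hst⟩) hcA
  -- Complete ↔ the same pointwise conditions
  have hcomp : CompleteLab (setafOf P) L ↔
      ∀ a ∈ argsOf P, (L a = Lab.inn ↔ legitIn P I a) ∧
        (L a = Lab.out ↔ legitOut P I a) := by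
    constructor
    · rintro ⟨hadm, hund⟩ a haA
      have hadm' := hadm a haA
      have hIn : L a = Lab.inn → legitIn P I a := by
        intro hin
        rw [bridge_in haA]
        rintro ⟨B, hatt, hBno⟩
        obtain ⟨b, hb, hbout⟩ := hadm'.1 hin B hatt
        exact hBno b hb hbout
      have hOut : L a = Lab.out → legitOut P I a := by
        intro hout
        rw [bridge_out haA]
        exact hadm'.2 hout
      have hUnd : L a = Lab.und → ¬ legitIn P I a ∧ ¬ legitOut P I a := by
        intro hu
        obtain ⟨h1, h2⟩ := hund a haA hu
        constructor
        · rw [bridge_in haA]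
          push_neg
          obtain ⟨B, hatt, hB⟩ := h1
          exact ⟨B, hatt, hB⟩
        · rw [bridge_out haA]
          rintro ⟨B, hatt, hBin⟩
          obtain ⟨b, hb, hbni⟩ := h2 B hatt
          exact hbni (hBin b hb)
      constructor
      · refine ⟨hIn, fun hleg => ?_⟩
        cases hLa : L a with
        | inn => rfl
        | out => exact absurd ⟨hleg, hOut hLa⟩ (not_legit_both hdis haA)
        | und => exact absurd hleg (hUnd hLa).1
      · refine ⟨hOut, fun hleg => ?_⟩
        cases hLa : L a with
        | inn => exact absurd ⟨hIn hLa, hleg⟩ (not_legit_both hdis haA)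
        | out => rfl
        | und => exact absurd hleg (hUnd hLa).2
    · intro h
      constructor
      · intro a haA
        constructor
        · intro hin B hatt
          have hleg : legitIn P I a := ((h a haA).1).1 hin
          rw [bridge_in haA] at hleg
          by_contra hno
          push_neg at hno
          exact hleg ⟨B, hatt, hno⟩
        · intro hout
          have hleg : legitOut P I a := ((h a haA).2).1 hout
          rw [bridge_out haA] at hleg
          exact hleg
      · intro a haA hu
        have hnin : ¬ legitIn P I a := by
          intro hleg
          have := ((h a haA).1).2 hleg
          rw [hu] at this; exact Lab.noConfusion this
        have hnout : ¬ legitOut P I a := by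
          intro hleg
          have := ((h a haA).2).2 hleg
          rw [hu] at this; exact Lab.noConfusion this
        constructor
        · rw [bridge_in haA] at hnin
          push_neg at hnin
          obtain ⟨B, hatt, hB⟩ := hnin
          exact ⟨B, hatt, hB⟩
        · intro B hatt
          rw [bridge_out haA] at hnout
          by_contra hno
          push_neg at hno
          exact hnout ⟨B, hatt, fun b hb => hno b hb⟩
  rw [hcomp]
  unfold IsPSModel
  rw [homega]
  constructor
  · intro h; exact ⟨hint, h⟩
  · rintro ⟨_, h⟩; exact h

/-- Round trip: a partial stable model is recovered from its labelling. -/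
lemma lemmaB {P : NLP α} {J : Interp α} (h : IsPSModel (HB P) P J) :
    L2I P (I2L J) = J := by
  classical
  obtain ⟨⟨hTH, hFH, hdis⟩, hfix⟩ := h
  have hTargs : J.T ⊆ ↑(argsOf P) := by
    intro c hc
    rw [← hfix, omega_T_spec hdis] at hc
    obtain ⟨V, R, hst, _⟩ := hc
    exact mem_args_iff.2 ⟨V, R, hst⟩
  have hI2L_in : ∀ c, I2L J c = Lab.inn ↔ c ∈ J.T := by
    intro c
    unfold I2L
    by_cases h1 : c ∈ J.T
    · simp [h1]
    · by_cases h2 : c ∈ J.F <;> simp [h1, h2]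
  have hI2L_out : ∀ c, I2L J c = Lab.out ↔ (c ∉ J.T ∧ c ∈ J.F) := by
    intro c
    unfold I2L
    by_cases h1 : c ∈ J.T
    · simp [h1]
    · by_cases h2 : c ∈ J.F <;> simp [h1, h2]
  refine interp_ext ?_ ?_
  · ext c
    constructor
    · rintro ⟨hcH, hcA, hcin⟩
      exact (hI2L_in c).1 hcin
    · intro hc
      exact ⟨hTH hc, hTargs hc, (hI2L_in c).2 hc⟩
  · ext c
    constructor
    · rintro ⟨hcH, hc⟩
      rcases hc with hcA | ⟨_, hcout⟩
      · rw [← hfix, omega_F_spec]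
        exact ⟨hcH, fun V R hst => absurd (mem_args_iff.2 ⟨V, R, hst⟩) hcA⟩
      · exact ((hI2L_out c).1 hcout).2
    · intro hc
      refine ⟨hFH hc, ?_⟩
      by_cases hcA : c ∈ argsOf P
      · right
        refine ⟨hcA, (hI2L_out c).2 ⟨fun hcT => ?_, hc⟩⟩
        exact Set.disjoint_left.1 hdis hcT hc
      · exact Or.inl hcA

end Aux

theorem stmt4 (P : NLP α) (L : α → Lab) :
    GroundedLab (setafOf P) L ↔ IsWFModel (HB P) P (L2I P L) := by
  constructor
  · rintro ⟨hc, hmin⟩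
    refine ⟨(lemmaA P L).1 hc, ?_⟩
    intro J hJ hsub
    have hJ' : IsPSModel (HB P) P (L2I P (I2L J)) := by
      rw [lemmaB hJ]; exact hJ
    have hcomp' : CompleteLab (setafOf P) (I2L J) := (lemmaA P (I2L J)).2 hJ'
    refine hmin (I2L J) hcomp' ?_
    rw [labIn_eq P (I2L J), labIn_eq P L, lemmaB hJ]
    exact hsub
  · rintro ⟨hps, hmin⟩
    refine ⟨(lemmaA P L).2 hps, ?_⟩
    intro L' hc' hsub
    have hps' : IsPSModel (HB P) P (L2I P L') := (lemmaA P L').1 hc'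
    refine hmin (L2I P L') hps' ?_
    rw [← labIn_eq P L', ← labIn_eq P L]
    exact hsub
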